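/- arXiv:1608.03207 — 3 statements merged into one kernel-verified Lean document; each statement's English description precedes it below -/
import Mathlib

section
/- Generalized Matrix Determinant Lemma: Let H be an n×n real matrix and u₁,…,u_k, v₁,…,v_k be column vectors in ℝⁿ. Define Δ₀ = 0 and Δᵢ = ∑_{j=1}^{i} uⱼ vⱼᵀ for i ≥ 1. Then det(H + Δ_k) = det(H) + ∑_{i=1}^{k} vᵢᵀ · adj(H + Δ_{i-1}) · uᵢ. -/
/-!
For invertible `A`, factoring `A + u vᵀ = A (1 + A⁻¹u vᵀ)` gives
`det (A + u vᵀ) = det A (1 + vᵀ A⁻¹ u) = det A + vᵀ adj(A) u`. This identity transfers to any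
matrix whose determinant is a non-zero-divisor by passing to the total ring of fractions, and
then to every matrix `A` by applying it to `X • 1 + A` over `R[X]` (whose determinant is monic)
and evaluating at `X = 0`. Applying the rank-one identity to `H + Δᵢ₋₁` and `uᵢ vᵢᵀ` for
`i = 1, …, k` telescopes to the theorem.
-/

open Matrix Polynomial Finset
open scoped nonZeroDivisors

variable {m R S : Type*} [Fintype m] [DecidableEq m] [CommRing R] [CommRing S]

theorem RingHom.mapMatrix_add_vecMulVec (f : R →+* S) (A : Matrix m m R) (u v : m → R) :
    f.mapMatrix (A + vecMulVec u v) = f.mapMatrix A + vecMulVec (f ∘ u) (f ∘ v) := by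
  ext i j
  simp [vecMulVec_apply]

theorem RingHom.map_dotProduct_adjugate_mulVec (f : R →+* S) (A : Matrix m m R) (u v : m → R) :
    f (v ⬝ᵥ (A.adjugate *ᵥ u)) = (f ∘ v) ⬝ᵥ ((f.mapMatrix A).adjugate *ᵥ (f ∘ u)) := by
  rw [RingHom.map_dotProduct, ← RingHom.map_adjugate]
  congr 1
  ext i
  exact RingHom.map_mulVec f _ u i

theorem det_add_vecMulVec_of_isUnit {A : Matrix m m R} (hA : IsUnit A.det) (u v : m → R) :
    (A + vecMulVec u v).det = A.det + v ⬝ᵥ (A.adjugate *ᵥ u) := by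
  have hfactor : A + vecMulVec u v = A * (1 + vecMulVec (A⁻¹ *ᵥ u) v) := by
    rw [Matrix.mul_add, Matrix.mul_one, mul_vecMulVec, mulVec_mulVec, mul_nonsing_inv _ hA,
      one_mulVec]
  have hadj : A.adjugate = A.det • A⁻¹ := by
    rw [nonsing_inv_apply _ hA, smul_smul, IsUnit.mul_val_inv, one_smul]
  rw [hfactor, det_mul, vecMulVec_eq Unit, det_one_add_replicateCol_mul_replicateRow, mul_add,
    mul_one, hadj, smul_mulVec, dotProduct_smul, smul_eq_mul]

theorem det_add_vecMulVec_of_mem_nonZeroDivisors {A : Matrix m m R} (hA : A.det ∈ R⁰)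
    (u v : m → R) : (A + vecMulVec u v).det = A.det + v ⬝ᵥ (A.adjugate *ᵥ u) := by
  let K := FractionRing R
  apply IsLocalization.injective K le_rfl
  rw [RingHom.map_det, RingHom.mapMatrix_add_vecMulVec, map_add,
    RingHom.map_dotProduct_adjugate_mulVec, RingHom.map_det]
  exact det_add_vecMulVec_of_isUnit (RingHom.map_det (algebraMap R K) A ▸
    IsLocalization.map_units K (⟨A.det, hA⟩ : R⁰)) _ _

theorem det_add_vecMulVec (A : Matrix m m R) (u v : m → R) :
    (A + vecMulVec u v).det = A.det + v ⬝ᵥ (A.adjugate *ᵥ u) := by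
  let B : Matrix m m R[X] := (X : R[X]) • 1 + A.map C
  have hB : B.det ∈ R[X]⁰ := Monic.mem_nonZeroDivisors (leadingCoeff_det_X_one_add_C A)
  have heval : (evalRingHom 0).mapMatrix B = A := by ext i j; simp [B]
  have hC (w : m → R) : evalRingHom 0 ∘ C ∘ w = w := by ext; simp
  clear_value B
  have := congrArg (evalRingHom 0) (det_add_vecMulVec_of_mem_nonZeroDivisors hB (C ∘ u) (C ∘ v))
  rwa [RingHom.map_det, RingHom.mapMatrix_add_vecMulVec, map_add,
    RingHom.map_dotProduct_adjugate_mulVec, RingHom.map_det, heval, hC, hC] at this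

theorem det_add_sum_vecMulVec (H : Matrix m m R) {k : ℕ} (u v : Fin k → m → R) :
    (H + ∑ j, vecMulVec (u j) (v j)).det =
      H.det + ∑ i, v i ⬝ᵥ ((H + ∑ j ∈ Iio i, vecMulVec (u j) (v j)).adjugate *ᵥ u i) := by
  induction k with
  | zero => simp
  | succ k ih =>
    simp only [Fin.sum_univ_castSucc, Fin.Iio_castSucc, Fin.Iio_last_eq_map, sum_map,
      Fin.coe_castSuccEmb]
    rw [← add_assoc, det_add_vecMulVec, ih, add_assoc]

theorem generalized_matrix_determinant_lemma (n k : ℕ)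
    (H : Matrix (Fin n) (Fin n) ℝ) (u v : Fin k → (Fin n → ℝ)) :
    (H + ∑ j : Fin k, Matrix.vecMulVec (u j) (v j)).det =
      H.det + ∑ i : Fin k, ∑ a, ∑ b,
        v i a *
          (H + ∑ j ∈ Finset.univ.filter (fun j : Fin k => (j : ℕ) < (i : ℕ)),
              Matrix.vecMulVec (u j) (v j)).adjugate a b *
          u i b := by
  have hIio (i : Fin k) : univ.filter (fun j : Fin k => (j : ℕ) < i) = Iio i := by
    ext; simp
  simp only [det_add_sum_vecMulVec, hIio, dotProduct, mulVec, mul_sum, mul_assoc]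
end

section
/- Let A be an n×n real matrix, B an n×1 column vector (single input), and K a 1×n row vector. Define the controllability matrices C(A,B) with columns B, AB, A²B, …, A^{n-1}B and C(A−BK,B) with columns B, (A−BK)B, …, (A−BK)^{n-1}B. Then det(C(A−BK,B)) = det(C(A,B)). -/
/-!
Since `(A - B K) v = A v - (K v) B`, each column `(A - B K)^j B` is `A^j B` minus a combination
of the earlier columns `A^i B`, `i < j`. Hence `C(A - B K, B) = C(A, B) T` with `T` upper
unitriangular, and `det T = 1`.
-/

open Matrix

/-- Controllability matrix of the pair `(M, B)`: the `j`-th column is `M ^ j *ᵥ B`. -/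
def ctrbMatrix {n : ℕ} (M : Matrix (Fin n) (Fin n) ℝ) (B : Fin n → ℝ) :
    Matrix (Fin n) (Fin n) ℝ :=
  Matrix.of fun i j => ((M ^ (j : ℕ)) *ᵥ B) i

section

variable {ι R : Type*} [Fintype ι] [DecidableEq ι] [CommRing R]

theorem sub_vecMulVec_pow_mulVec (A : Matrix ι ι R) (b k : ι → R) (j : ℕ) :
    (A - vecMulVec b k) ^ j *ᵥ b =
      A ^ j *ᵥ b - ∑ i ∈ Finset.range j,
        (k ⬝ᵥ ((A - vecMulVec b k) ^ (j - 1 - i) *ᵥ b)) • (A ^ i *ᵥ b) := by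
  induction j with
  | zero => simp
  | succ j ih =>
    rw [pow_succ', ← mulVec_mulVec, sub_mulVec, vecMulVec_mulVec, op_smul_eq_smul]
    nth_rw 1 [ih]
    rw [mulVec_sub, mulVec_sum, Finset.sum_range_succ', mulVec_mulVec, ← pow_succ']
    simp only [mulVec_smul, mulVec_mulVec, ← pow_succ', Nat.add_sub_cancel, Nat.sub_zero,
      pow_zero, one_mulVec, Nat.sub_sub, Nat.add_comm 1]
    abel

theorem det_add_mul_of_strictUpper [LinearOrder ι] (C U : Matrix ι ι R)
    (hU : ∀ i j, j ≤ i → U i j = 0) : (C + C * U).det = C.det := by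
  have hdiag : (1 + U).det = 1 := by
    rw [det_of_isUpperTriangular fun i j (hji : j < i) => by
      rw [Matrix.add_apply, one_apply_ne hji.ne', hU i j hji.le, add_zero]]
    simp [hU]
  rw [← mul_one_add, det_mul, hdiag, mul_one]

end

theorem ctrbMatrix_sub_vecMulVec {n : ℕ} (A : Matrix (Fin n) (Fin n) ℝ) (B K : Fin n → ℝ) :
    ctrbMatrix (A - vecMulVec B K) B = ctrbMatrix A B + ctrbMatrix A B * of fun (k j : Fin n) =>
      if k < j then -(K ⬝ᵥ ((A - vecMulVec B K) ^ ((j : ℕ) - 1 - k) *ᵥ B)) else 0 := by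
  ext i j
  have hfilter : (Finset.range n).filter (· < (j : ℕ)) = Finset.range j := by
    ext m; simp only [Finset.mem_filter, Finset.mem_range]; omega
  rw [Matrix.add_apply, mul_apply]
  simp only [ctrbMatrix, of_apply, mul_ite, mul_zero, mul_neg, Fin.lt_def,
    sub_vecMulVec_pow_mulVec A B K j]
  rw [Fin.sum_univ_eq_sum_range (fun m => if m < (j : ℕ) then
      -((A ^ m *ᵥ B) i * K ⬝ᵥ (A - vecMulVec B K) ^ ((j : ℕ) - 1 - m) *ᵥ B) else 0),
    ← Finset.sum_filter, hfilter]
  simp [sub_eq_add_neg, mul_comm]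

theorem det_ctrb_feedback_invariant_general (n : ℕ)
    (A : Matrix (Fin n) (Fin n) ℝ) (B K : Fin n → ℝ) :
    (ctrbMatrix (A - Matrix.vecMulVec B K) B).det = (ctrbMatrix A B).det := by
  rw [ctrbMatrix_sub_vecMulVec, det_add_mul_of_strictUpper]
  intro k j hjk
  simp [not_lt.2 hjk]

theorem det_ctrb_feedback_invariant (n : ℕ) (hn : 1 ≤ n)
    (A : Matrix (Fin n) (Fin n) ℝ) (B K : Fin n → ℝ) :
    (ctrbMatrix (A - Matrix.vecMulVec B K) B).det = (ctrbMatrix A B).det :=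
  det_ctrb_feedback_invariant_general n A B K
end

section
/- Let A be an n×n real matrix, B ∈ ℝⁿ a column vector, K ∈ ℝⁿ a row vector, m = 1. Then C(A−BK, B) = C(A, B) · T, where C(M,B) is the controllability matrix with columns M^j B (j = 0,…,n−1) and T is the upper unitriangular n×n matrix with T_{i,i} = 1, T_{i,j} = −K (A−BK)^{j−i−1} B for j > i, and T_{i,j} = 0 for j < i. In particular det(T) = 1. -/
open Matrix

lemma vecMulVec_mulVec' {n : ℕ} (B K x : Fin n → ℝ) :
    Matrix.vecMulVec B K *ᵥ x = (K ⬝ᵥ x) • B := by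
  funext i
  simp only [Matrix.vecMulVec, Matrix.mulVec, dotProduct, Pi.smul_apply, smul_eq_mul,
    Matrix.of_apply, Finset.sum_mul, Finset.mul_sum]
  exact Finset.sum_congr rfl fun j _ => by ring

lemma key (n : ℕ) (A : Matrix (Fin n) (Fin n) ℝ) (B K : Fin n → ℝ) (m : ℕ) :
    ((A - Matrix.vecMulVec B K) ^ m) *ᵥ B =
      (A ^ m) *ᵥ B - ∑ k ∈ Finset.range m,
        (K ⬝ᵥ (((A - Matrix.vecMulVec B K) ^ (m - 1 - k)) *ᵥ B)) • ((A ^ k) *ᵥ B) := by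
  induction m with
  | zero => simp
  | succ m ih =>
    set F := A - Matrix.vecMulVec B K with hF
    have hstep : F ^ (m+1) *ᵥ B = A *ᵥ (F ^ m *ᵥ B) - (K ⬝ᵥ (F ^ m *ᵥ B)) • B := by
      rw [pow_succ', ← Matrix.mulVec_mulVec, hF, Matrix.sub_mulVec, vecMulVec_mulVec']
    rw [hstep, ih, Matrix.mulVec_sub, Matrix.mulVec_mulVec, ← pow_succ']
    have h2 : A *ᵥ (∑ k ∈ Finset.range m, (K ⬝ᵥ (F ^ (m - 1 - k)) *ᵥ B) • ((A ^ k) *ᵥ B))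
        = ∑ k ∈ Finset.range m, (K ⬝ᵥ (F ^ (m - 1 - k)) *ᵥ B) • ((A ^ (k+1)) *ᵥ B) :=
      calc A *ᵥ (∑ k ∈ Finset.range m, (K ⬝ᵥ (F ^ (m - 1 - k)) *ᵥ B) • ((A ^ k) *ᵥ B))
          = A.mulVecLin (∑ k ∈ Finset.range m,
              (K ⬝ᵥ (F ^ (m - 1 - k)) *ᵥ B) • ((A ^ k) *ᵥ B)) := rfl
        _ = ∑ k ∈ Finset.range m,
              A.mulVecLin ((K ⬝ᵥ (F ^ (m - 1 - k)) *ᵥ B) • ((A ^ k) *ᵥ B)) := map_sum _ _ _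
        _ = ∑ k ∈ Finset.range m, (K ⬝ᵥ (F ^ (m - 1 - k)) *ᵥ B) • ((A ^ (k+1)) *ᵥ B) :=
            Finset.sum_congr rfl fun k _ => by
              simp [Matrix.mulVecLin_apply, Matrix.mulVec_smul, Matrix.mulVec_mulVec,
                ← pow_succ']
    rw [h2, Finset.sum_range_succ']
    have h3 : ∀ k, m + 1 - 1 - (k + 1) = m - 1 - k := fun k => by omega
    simp only [h3]
    simp only [Nat.sub_zero, Nat.add_sub_cancel]
    simp only [pow_zero, Matrix.one_mulVec]
    rw [sub_sub, ← ih]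

theorem ctrb_feedback_factorization (n : ℕ)
    (A : Matrix (Fin n) (Fin n) ℝ) (B K : Fin n → ℝ) :
    ctrbMatrix (A - Matrix.vecMulVec B K) B =
      ctrbMatrix A B *
        Matrix.of (fun i j : Fin n =>
          if i = j then (1 : ℝ)
          else if (i : ℕ) < (j : ℕ) then
            -(∑ a, ∑ b,
              K a * ((A - Matrix.vecMulVec B K) ^ ((j : ℕ) - (i : ℕ) - 1)) a b * B b)
          else 0) ∧
    (Matrix.of (fun i j : Fin n =>
          if i = j then (1 : ℝ)
          else if (i : ℕ) < (j : ℕ) then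
            -(∑ a, ∑ b,
              K a * ((A - Matrix.vecMulVec B K) ^ ((j : ℕ) - (i : ℕ) - 1)) a b * B b)
          else 0)).det = 1 := by
  set F := A - Matrix.vecMulVec B K with hF
  have hc : ∀ p : ℕ, (∑ a, ∑ b, K a * (F ^ p) a b * B b) = K ⬝ᵥ ((F ^ p) *ᵥ B) := by
    intro p
    simp [dotProduct, Matrix.mulVec, Finset.mul_sum, mul_assoc]
  constructor
  · funext i j
    show ((F ^ (j : ℕ)) *ᵥ B) i = _
    rw [Matrix.mul_apply]
    set f : ℕ → ℝ := fun k => ((A ^ k) *ᵥ B) i *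
        (if k = (j : ℕ) then (1 : ℝ)
         else if k < (j : ℕ) then -(K ⬝ᵥ ((F ^ ((j : ℕ) - k - 1)) *ᵥ B)) else 0) with hf
    have h1 : ∀ k : Fin n,
        ctrbMatrix A B i k * (Matrix.of (fun i j : Fin n =>
          if i = j then (1 : ℝ)
          else if (i : ℕ) < (j : ℕ) then
            -(∑ a, ∑ b, K a * (F ^ ((j : ℕ) - (i : ℕ) - 1)) a b * B b)
          else 0)) k j = f (k : ℕ) := by
      intro k
      simp only [hf, ctrbMatrix, Matrix.of_apply, hc, Fin.ext_iff]
    calc ((F ^ (j : ℕ)) *ᵥ B) i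
        = ((A ^ (j : ℕ)) *ᵥ B) i
            - ∑ k ∈ Finset.range (j : ℕ),
                ((A ^ k) *ᵥ B) i * (K ⬝ᵥ ((F ^ ((j : ℕ) - k - 1)) *ᵥ B)) := by
          rw [key]
          simp only [Pi.sub_apply, Finset.sum_apply, Pi.smul_apply, smul_eq_mul, ← hF]
          congr 1
          exact Finset.sum_congr rfl fun k hk => by
            rw [show (j : ℕ) - 1 - k = (j : ℕ) - k - 1 from by omega]; ring
      _ = ∑ k ∈ Finset.range ((j : ℕ) + 1), f k := by
          have h2 : ∑ k ∈ Finset.range (j : ℕ), f k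
              = ∑ k ∈ Finset.range (j : ℕ),
                  ((A ^ k) *ᵥ B) i * -(K ⬝ᵥ ((F ^ ((j : ℕ) - k - 1)) *ᵥ B)) :=
            Finset.sum_congr rfl fun k hk => by
              have hlt := Finset.mem_range.mp hk
              simp only [hf, if_neg (Nat.ne_of_lt hlt), if_pos hlt]
          rw [Finset.sum_range_succ, h2, hf]
          simp only [if_pos rfl, ite_true, mul_one, mul_neg, Finset.sum_neg_distrib]
          ring
      _ = ∑ k ∈ Finset.range n, f k :=
          Finset.sum_subset (Finset.range_subset_range.2 (by omega : (j : ℕ) + 1 ≤ n))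
            (fun k _ hk => by
              have hne : ¬ k = (j : ℕ) := fun h =>
                hk (Finset.mem_range.2 (by omega))
              have hnlt : ¬ k < (j : ℕ) := fun h =>
                hk (Finset.mem_range.2 (by omega))
              simp only [hf, if_neg hne, if_neg hnlt, mul_zero])
      _ = ∑ k : Fin n, f (k : ℕ) := (Fin.sum_univ_eq_sum_range f n).symm
      _ = _ := Finset.sum_congr rfl fun k _ => (h1 k).symm
  · rw [Matrix.det_of_upperTriangular]
    · simp
    · intro i j hij
      have hji : j < i := hij
      simp [hji.ne', asymm hji]
end
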